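/- Under the same hypotheses as the variable-coefficient backward estimate — Ω a bounded smooth domain in ℝ^N, T > 0, 1 < p ≤ 2, M : [0,T]×Ω → ℝ with 0 < a ≤ M ≤ b, C a T-independent L^p maximal-regularity constant for the backward heat equation with diffusivity (a+b)/2 and homogeneous Neumann boundary condition, and C·(b−a)/2 < 1 — any (sufficiently regular) solution v of ∂_t v + M Δ_x v = f on [0,T]×Ω with v(T,·) = 0 and homogeneous Neumann boundary condition satisfies ‖v(0,·)‖_{L^p(Ω)} ≤ (1 + b·D)·T^{1/p'}·‖f‖_{L^p([0,T]×Ω)}, where D = C/(1 − C·(b−a)/2) and p' is the Hölder conjugate of p. -/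

import Mathlib

/-!
Freezing the coefficient at `c = (a+b)/2` writes the equation as `∂ₜv + cΔv = f - (M - c)Δv`
with `|M - c| ≤ (b-a)/2`, so maximal regularity gives `‖Δv‖ ≤ C (‖f‖ + (b-a)/2 ‖Δv‖)`; since
`Δv` is continuous on the bounded cylinder, `‖Δv‖ < ∞` and the term can be absorbed:
`‖Δv‖ ≤ D ‖f‖`. Then `∂ₜv = f - MΔv` gives `‖∂ₜv‖ ≤ (1 + bD) ‖f‖`, and `v(0) = -∫₀ᵀ ∂ₜv`
because `v(T) = 0`; Hölder's inequality in time contributes the factor `T^{1/p'}`.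
-/

open MeasureTheory Real Set Function
open scoped ENNReal

noncomputable section

/-- The Laplacian of `f : ℝ^N → ℝ`, computed as the sum of the second partial
derivatives in the coordinate directions. -/
def lapl {N : ℕ} (f : EuclideanSpace ℝ (Fin N) → ℝ) (x : EuclideanSpace ℝ (Fin N)) : ℝ :=
  ∑ i : Fin N, fderiv ℝ (fun y => fderiv ℝ f y (EuclideanSpace.single i 1)) x
    (EuclideanSpace.single i 1)

/-- The time derivative of `u : ℝ → ℝ^N → ℝ`. -/
def tderiv {N : ℕ} (u : ℝ → EuclideanSpace ℝ (Fin N) → ℝ) (t : ℝ)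
    (x : EuclideanSpace ℝ (Fin N)) : ℝ :=
  deriv (fun s => u s x) t

/-- The natural (product Lebesgue) measure on the parabolic cylinder `[0,T] × Ω`. -/
def cylMeasure {N : ℕ} (T : ℝ) (Ω : Set (EuclideanSpace ℝ (Fin N))) :
    Measure (ℝ × EuclideanSpace ℝ (Fin N)) :=
  (volume.restrict (Icc 0 T)).prod (volume.restrict Ω)

section Calculus

variable {P E F : Type*} [NormedAddCommGroup P] [NormedSpace ℝ P] [NormedAddCommGroup E]
  [NormedSpace ℝ E] [NormedAddCommGroup F] [NormedSpace ℝ F]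

theorem ContDiff.uncurry_fderiv_apply {v : P → E → F} {m n : WithTop ℕ∞}
    (hv : ContDiff ℝ n (uncurry v)) (hmn : m + 1 ≤ n) (e : E) :
    ContDiff ℝ m (uncurry fun t y => fderiv ℝ (v t) y e) :=
  (ContDiff.fderiv (f := fun z y => v z.1 y) (hv.comp (contDiff_fst.fst.prodMk contDiff_snd))
    contDiff_snd hmn).clm_apply contDiff_const

end Calculus

section SpaceTime

variable {N : ℕ} {v : ℝ → EuclideanSpace ℝ (Fin N) → ℝ}

theorem continuous_tderiv (hv : ContDiff ℝ 1 (uncurry v)) :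
    Continuous fun z : ℝ × EuclideanSpace ℝ (Fin N) => tderiv v z.1 z.2 := by
  have hswap : ContDiff ℝ 1 (uncurry fun x s => v s x) := hv.comp (contDiff_snd.prodMk contDiff_fst)
  exact (hswap.uncurry_fderiv_apply (m := 0) (by norm_num) 1).continuous.comp continuous_swap

theorem continuous_lapl (hv : ContDiff ℝ 2 (uncurry v)) :
    Continuous fun z : ℝ × EuclideanSpace ℝ (Fin N) => lapl (v z.1) z.2 :=
  continuous_finsetSum _ fun i _ =>
    ((hv.uncurry_fderiv_apply (m := 1) (by norm_num) _).uncurry_fderiv_apply (m := 0)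
      (by norm_num) _).continuous

theorem hasDerivAt_tderiv (hv : ContDiff ℝ 1 (uncurry v)) (s : ℝ) (x : EuclideanSpace ℝ (Fin N)) :
    HasDerivAt (fun s => v s x) (tderiv v s x) s :=
  DifferentiableAt.hasDerivAt <| (hv.differentiable one_ne_zero (s, x)).comp (f := fun s => (s, x))
    s (differentiableAt_id.prodMk (differentiableAt_const x))

theorem integral_tderiv_eq_sub (hv : ContDiff ℝ 1 (uncurry v)) (a b : ℝ)
    (x : EuclideanSpace ℝ (Fin N)) :
    ∫ s in a..b, tderiv v s x = v b x - v a x :=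
  intervalIntegral.integral_eq_sub_of_hasDerivAt (fun s _ => hasDerivAt_tderiv hv s x)
    (((continuous_tderiv hv).comp (continuous_id.prodMk continuous_const)).intervalIntegrable a b)

end SpaceTime

section Lp

variable {α : Type*} [MeasurableSpace α] {μ : Measure α}

theorem eLpNorm_le_add_mul_of_ae_abs_le {p : ℝ≥0∞} (hp : 1 ≤ p) {f g k : α → ℝ} {c : ℝ}
    (hc : 0 ≤ c) (hg : AEStronglyMeasurable g μ) (hk : AEStronglyMeasurable k μ)
    (hgfk : ∀ᵐ x ∂μ, |g x| ≤ |f x| + c * |k x|) :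
    eLpNorm g p μ ≤ eLpNorm f p μ + ENNReal.ofReal c * eLpNorm k p μ := by
  -- `f` need not be measurable, so the triangle inequality is applied to `r + c |k|` instead.
  set r : α → ℝ := fun x => max (|g x| - c * |k x|) 0
  have hck : eLpNorm (fun x => c * |k x|) p μ = ENNReal.ofReal c * eLpNorm k p μ := by
    have hsmul : (fun x => c * |k x|) = c • fun x => ‖k x‖ := rfl
    rw [hsmul, eLpNorm_const_smul, eLpNorm_norm, Real.enorm_of_nonneg hc]
  calc eLpNorm g p μ ≤ eLpNorm (fun x => r x + c * |k x|) p μ := by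
        refine eLpNorm_mono_real fun x => ?_
        rw [Real.norm_eq_abs]
        linarith [le_max_left (|g x| - c * |k x|) 0]
    _ ≤ eLpNorm r p μ + eLpNorm (fun x => c * |k x|) p μ :=
        eLpNorm_add_le ((hg.norm.sub (hk.norm.const_mul c)).sup aestronglyMeasurable_const)
          (hk.norm.const_mul c) hp
    _ ≤ eLpNorm f p μ + ENNReal.ofReal c * eLpNorm k p μ := by
        rw [hck]
        gcongr
        refine eLpNorm_mono_ae ?_
        filter_upwards [hgfk] with x hx
        rw [Real.norm_of_nonneg (le_max_right _ _), Real.norm_eq_abs]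
        exact max_le (by linarith) (abs_nonneg _)

theorem le_ofReal_div_mul_of_le_ofReal_mul_add {X Y : ℝ≥0∞} {C ε : ℝ} (hC : 0 < C) (hε : 0 ≤ ε)
    (hCε : C * ε < 1) (hX : X ≠ ⊤) (hXY : X ≤ ENNReal.ofReal C * (Y + ENNReal.ofReal ε * X)) :
    X ≤ ENNReal.ofReal (C / (1 - C * ε)) * Y := by
  have hden : 0 < 1 - C * ε := by linarith
  rcases eq_or_ne Y ⊤ with rfl | hY
  · rw [ENNReal.mul_top (by simpa using div_pos hC hden)]
    exact le_top
  have hreal : X.toReal ≤ C * (Y.toReal + ε * X.toReal) := by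
    have := ENNReal.toReal_mono (by finiteness) hXY
    rwa [ENNReal.toReal_mul, ENNReal.toReal_add hY (by finiteness), ENNReal.toReal_mul,
      ENNReal.toReal_ofReal hC.le, ENNReal.toReal_ofReal hε] at this
  rw [← ENNReal.ofReal_toReal hX, ← ENNReal.ofReal_toReal hY,
    ← ENNReal.ofReal_mul (div_nonneg hC.le hden.le)]
  refine ENNReal.ofReal_le_ofReal ?_
  rw [div_mul_eq_mul_div, le_div_iff₀ hden]
  nlinarith

theorem enorm_intervalIntegral_le_eLpNorm {g : ℝ → ℝ} {T : ℝ} (hT : 0 ≤ T) {p : ℝ≥0∞} (hp : 1 ≤ p)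
    (hg : AEStronglyMeasurable g (volume.restrict (Icc 0 T))) :
    ‖∫ s in 0..T, g s‖ₑ ≤
      eLpNorm g p (volume.restrict (Icc 0 T)) * ENNReal.ofReal T ^ (1 - 1 / p.toReal) := by
  rw [intervalIntegral.integral_of_le hT, ← integral_Icc_eq_integral_Ioc]
  calc ‖∫ s in Icc 0 T, g s‖ₑ ≤ eLpNorm g 1 (volume.restrict (Icc 0 T)) := by
        rw [eLpNorm_one_eq_lintegral_enorm]; exact enorm_integral_le_lintegral_enorm g
    _ ≤ _ := by
        simpa [Real.volume_Icc] using eLpNorm_le_eLpNorm_mul_rpow_measure_univ hp hg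

theorem eLpNorm_intervalIntegral_le [SFinite μ] {T p : ℝ} (hT : 0 ≤ T) (hp : 1 ≤ p)
    {h : ℝ × α → ℝ} (hh : Measurable h) :
    eLpNorm (fun x => ∫ s in 0..T, h (s, x)) (ENNReal.ofReal p) μ ≤
      ENNReal.ofReal (T ^ (1 - 1 / p)) *
        eLpNorm h (ENNReal.ofReal p) ((volume.restrict (Icc 0 T)).prod μ) := by
  set ν := volume.restrict (Icc (0 : ℝ) T)
  set c := ENNReal.ofReal (T ^ (1 - 1 / p))
  have hp0 : 0 < p := by linarith
  have hP0 : ENNReal.ofReal p ≠ 0 := by simpa using hp0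
  have hPp : (ENNReal.ofReal p).toReal = p := ENNReal.toReal_ofReal hp0.le
  have hslice : ∀ x, ‖∫ s in 0..T, h (s, x)‖ₑ ^ p ≤ (∫⁻ s, ‖h (s, x)‖ₑ ^ p ∂ν) * c ^ p := by
    intro x
    have := enorm_intervalIntegral_le_eLpNorm (g := fun s => h (s, x)) hT
      (ENNReal.one_le_ofReal.2 hp) (hh.comp measurable_prodMk_right).aestronglyMeasurable
    rw [hPp, eLpNorm_eq_lintegral_rpow_enorm_toReal hP0 ENNReal.ofReal_ne_top, hPp,
      ENNReal.ofReal_rpow_of_nonneg hT (by rw [sub_nonneg, div_le_one hp0]; exact hp)] at this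
    calc _ ≤ ((∫⁻ s, ‖h (s, x)‖ₑ ^ p ∂ν) ^ (1 / p) * c) ^ p := by gcongr
      _ = _ := by
        rw [ENNReal.mul_rpow_of_nonneg _ _ hp0.le, ← ENNReal.rpow_mul, one_div_mul_cancel hp0.ne',
          ENNReal.rpow_one]
  rw [eLpNorm_eq_lintegral_rpow_enorm_toReal hP0 ENNReal.ofReal_ne_top,
    eLpNorm_eq_lintegral_rpow_enorm_toReal hP0 ENNReal.ofReal_ne_top, hPp,
    lintegral_prod_symm _ (hh.enorm.pow_const p).aemeasurable]
  calc (∫⁻ x, ‖∫ s in 0..T, h (s, x)‖ₑ ^ p ∂μ) ^ (1 / p)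
      ≤ ((∫⁻ x, ∫⁻ s, ‖h (s, x)‖ₑ ^ p ∂ν ∂μ) * c ^ p) ^ (1 / p) := by
        rw [← lintegral_mul_const' _ _
          (ENNReal.rpow_ne_top_of_nonneg hp0.le ENNReal.ofReal_ne_top)]
        gcongr with x
        exact hslice x
    _ = c * (∫⁻ x, ∫⁻ s, ‖h (s, x)‖ₑ ^ p ∂ν ∂μ) ^ (1 / p) := by
        rw [ENNReal.mul_rpow_of_nonneg _ _ (by positivity), ← ENNReal.rpow_mul,
          mul_one_div_cancel hp0.ne', ENNReal.rpow_one, mul_comm]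

end Lp

theorem abs_sub_mul_le_of_abs_le {y m l e : ℝ} (hm : |m| ≤ e) : |y - m * l| ≤ |y| + e * |l| :=
  (abs_sub _ _).trans (by rw [abs_mul]; gcongr)

section Cylinder

variable {N : ℕ} {Ω : Set (EuclideanSpace ℝ (Fin N))} {T : ℝ}

theorem ae_mem_cylMeasure (hΩ : MeasurableSet Ω) :
    ∀ᵐ z ∂cylMeasure T Ω, z.1 ∈ Icc 0 T ∧ z.2 ∈ Ω := by
  rw [cylMeasure, Measure.prod_restrict]
  exact ae_restrict_mem (measurableSet_Icc.prod hΩ)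

theorem isFiniteMeasure_cylMeasure (hΩ : Bornology.IsBounded Ω) :
    IsFiniteMeasure (cylMeasure T Ω) := by
  have : IsFiniteMeasure (volume.restrict Ω) := isFiniteMeasure_restrict.2 hΩ.measure_lt_top.ne
  unfold cylMeasure
  infer_instance

theorem Continuous.memLp_cylMeasure {u : ℝ × EuclideanSpace ℝ (Fin N) → ℝ} (hu : Continuous u)
    (hΩ : MeasurableSet Ω) (hΩb : Bornology.IsBounded Ω) (p : ℝ≥0∞) :
    MemLp u p (cylMeasure T Ω) := by
  have := isFiniteMeasure_cylMeasure (T := T) hΩb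
  obtain ⟨R, hR⟩ := (isCompact_Icc.prod hΩb.isCompact_closure).exists_bound_of_continuousOn
    hu.continuousOn
  refine MemLp.of_bound hu.aestronglyMeasurable R ?_
  filter_upwards [ae_mem_cylMeasure hΩ] with z hz
  exact hR z ⟨hz.1, subset_closure hz.2⟩

variable {p : ℝ≥0∞} {M v f : ℝ → EuclideanSpace ℝ (Fin N) → ℝ}

theorem eLpNorm_lapl_le (hΩ : MeasurableSet Ω) (hΩb : Bornology.IsBounded Ω) (hp : 1 ≤ p)
    (hv : ContDiff ℝ 2 (uncurry v))
    (hpde : ∀ t ∈ Icc 0 T, ∀ x ∈ Ω, tderiv v t x + M t x * lapl (v t) x = f t x)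
    {c ε C : ℝ} (hMc : ∀ t ∈ Icc 0 T, ∀ x ∈ Ω, |M t x - c| ≤ ε) (hε : 0 ≤ ε) (hC : 0 < C)
    (hCε : C * ε < 1)
    (hmax : eLpNorm (fun z => lapl (v z.1) z.2) p (cylMeasure T Ω) ≤ ENNReal.ofReal C *
      eLpNorm (fun z => tderiv v z.1 z.2 + c * lapl (v z.1) z.2) p (cylMeasure T Ω)) :
    eLpNorm (fun z => lapl (v z.1) z.2) p (cylMeasure T Ω) ≤
      ENNReal.ofReal (C / (1 - C * ε)) * eLpNorm (fun z => f z.1 z.2) p (cylMeasure T Ω) := by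
  have hL := continuous_lapl hv
  refine le_ofReal_div_mul_of_le_ofReal_mul_add hC hε hCε
    ((hL.memLp_cylMeasure hΩ hΩb p).eLpNorm_ne_top) (hmax.trans ?_)
  gcongr
  refine eLpNorm_le_add_mul_of_ae_abs_le hp hε
    ((continuous_tderiv (hv.of_le one_le_two)).add (continuous_const.mul hL)).aestronglyMeasurable
    hL.aestronglyMeasurable ?_
  filter_upwards [ae_mem_cylMeasure hΩ] with z ⟨ht, hx⟩
  rw [← hpde z.1 ht z.2 hx]
  convert abs_sub_mul_le_of_abs_le (y := tderiv v z.1 z.2 + M z.1 z.2 * lapl (v z.1) z.2)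
    (l := lapl (v z.1) z.2) (hMc z.1 ht z.2 hx) using 2
  ring

theorem eLpNorm_tderiv_le (hΩ : MeasurableSet Ω) (hp : 1 ≤ p) (hv : ContDiff ℝ 2 (uncurry v))
    (hpde : ∀ t ∈ Icc 0 T, ∀ x ∈ Ω, tderiv v t x + M t x * lapl (v t) x = f t x)
    {b : ℝ} (hMb : ∀ t ∈ Icc 0 T, ∀ x ∈ Ω, |M t x| ≤ b) (hb : 0 ≤ b) :
    eLpNorm (fun z => tderiv v z.1 z.2) p (cylMeasure T Ω) ≤
      eLpNorm (fun z => f z.1 z.2) p (cylMeasure T Ω) +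
        ENNReal.ofReal b * eLpNorm (fun z => lapl (v z.1) z.2) p (cylMeasure T Ω) := by
  refine eLpNorm_le_add_mul_of_ae_abs_le hp hb
    (continuous_tderiv (hv.of_le one_le_two)).aestronglyMeasurable
    (continuous_lapl hv).aestronglyMeasurable ?_
  filter_upwards [ae_mem_cylMeasure hΩ] with z ⟨ht, hx⟩
  rw [← hpde z.1 ht z.2 hx]
  convert abs_sub_mul_le_of_abs_le (y := tderiv v z.1 z.2 + M z.1 z.2 * lapl (v z.1) z.2)
    (l := lapl (v z.1) z.2) (hMb z.1 ht z.2 hx) using 2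
  ring

end Cylinder

theorem stmt_3_general
    (N : ℕ) (Ω : Set (EuclideanSpace ℝ (Fin N))) (φ : EuclideanSpace ℝ (Fin N) → ℝ)
    (hΩopen : IsOpen Ω) (hΩbdd : Bornology.IsBounded Ω)
    (T : ℝ) (hT : 0 < T)
    (p pc : ℝ) (hp1 : 1 < p) (hpc : 1 / p + 1 / pc = 1)
    (M : ℝ → EuclideanSpace ℝ (Fin N) → ℝ)
    (a b : ℝ) (ha : 0 < a) (hab : a ≤ b)
    (hM : ∀ t ∈ Icc (0 : ℝ) T, ∀ x ∈ Ω, a ≤ M t x ∧ M t x ≤ b)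
    (C : ℝ) (hC : 0 < C)
    -- `C` is a T-independent `L^p` maximal regularity constant for the backward heat
    -- equation with diffusivity `(a+b)/2` and Neumann boundary conditions:
    (hmaxreg : ∀ T' > (0 : ℝ), ∀ w g : ℝ → EuclideanSpace ℝ (Fin N) → ℝ,
      ContDiff ℝ 2 (uncurry w) →
      (∀ t ∈ Icc (0 : ℝ) T', ∀ x ∈ Ω,
        tderiv w t x + ((a + b) / 2) * lapl (w t) x = g t x) →
      (∀ x ∈ Ω, w T' x = 0) →
      (∀ t ∈ Icc (0 : ℝ) T', ∀ x ∈ frontier Ω, fderiv ℝ (w t) x (gradient φ x) = 0) →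
      eLpNorm (fun z : ℝ × EuclideanSpace ℝ (Fin N) => lapl (w z.1) z.2)
          (ENNReal.ofReal p) (cylMeasure T' Ω)
        ≤ ENNReal.ofReal C *
          eLpNorm (fun z : ℝ × EuclideanSpace ℝ (Fin N) => g z.1 z.2)
            (ENNReal.ofReal p) (cylMeasure T' Ω))
    (hsmall : C * ((b - a) / 2) < 1)
    (v f : ℝ → EuclideanSpace ℝ (Fin N) → ℝ)
    -- sufficient regularity of the solution
    (hreg : ContDiff ℝ 2 (uncurry v))
    -- the equation `∂ₜ v + M Δ v = f` on `[0,T] × Ω`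
    (hpde : ∀ t ∈ Icc (0 : ℝ) T, ∀ x ∈ Ω,
      tderiv v t x + M t x * lapl (v t) x = f t x)
    -- final condition `v(T,·) = 0`
    (hfinal : ∀ x ∈ Ω, v T x = 0)
    -- homogeneous Neumann boundary condition
    (hbc : ∀ t ∈ Icc (0 : ℝ) T, ∀ x ∈ frontier Ω, fderiv ℝ (v t) x (gradient φ x) = 0) :
    eLpNorm (v 0) (ENNReal.ofReal p) (volume.restrict Ω)
      ≤ ENNReal.ofReal ((1 + b * (C / (1 - C * ((b - a) / 2)))) * T ^ (1 / pc)) *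
        eLpNorm (fun z : ℝ × EuclideanSpace ℝ (Fin N) => f z.1 z.2)
          (ENNReal.ofReal p) (cylMeasure T Ω) := by
  set D := C / (1 - C * ((b - a) / 2))
  set Fₚ := eLpNorm (fun z : ℝ × EuclideanSpace ℝ (Fin N) => f z.1 z.2) (ENNReal.ofReal p)
    (cylMeasure T Ω)
  have hp : 1 ≤ ENNReal.ofReal p := ENNReal.one_le_ofReal.2 hp1.le
  have hb : 0 ≤ b := ha.le.trans hab
  have hMc : ∀ t ∈ Icc 0 T, ∀ x ∈ Ω, |M t x - (a + b) / 2| ≤ (b - a) / 2 := fun t ht x hx =>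
    abs_le.2 (by constructor <;> linarith [hM t ht x hx])
  have hMb : ∀ t ∈ Icc 0 T, ∀ x ∈ Ω, |M t x| ≤ b := fun t ht x hx =>
    abs_le.2 (by constructor <;> linarith [hM t ht x hx])
  have hlapl := eLpNorm_lapl_le hΩopen.measurableSet hΩbdd hp hreg hpde hMc (by linarith) hC hsmall
    (hmaxreg T hT v (fun t x => tderiv v t x + (a + b) / 2 * lapl (v t) x) hreg
      (fun _ _ _ _ => rfl) hfinal hbc)
  have htderiv := eLpNorm_tderiv_le hΩopen.measurableSet hp hreg hpde hMb hb
  have hv0 : v 0 =ᵐ[volume.restrict Ω] -fun x => ∫ s in 0..T, tderiv v s x := by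
    filter_upwards [ae_restrict_mem hΩopen.measurableSet] with x hx
    rw [Pi.neg_apply, integral_tderiv_eq_sub (hreg.of_le one_le_two), hfinal x hx]
    ring
  rw [eLpNorm_congr_ae hv0, eLpNorm_neg, show 1 / pc = 1 - 1 / p by linarith]
  calc _ ≤ ENNReal.ofReal (T ^ (1 - 1 / p)) *
        eLpNorm (fun z => tderiv v z.1 z.2) (ENNReal.ofReal p) (cylMeasure T Ω) :=
        eLpNorm_intervalIntegral_le hT.le hp1.le
          (continuous_tderiv (hreg.of_le one_le_two)).measurable
    _ ≤ ENNReal.ofReal (T ^ (1 - 1 / p)) *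
        (Fₚ + ENNReal.ofReal b * (ENNReal.ofReal D * Fₚ)) := by
        gcongr
        exact htderiv.trans (by gcongr)
    _ = _ := by
        rw [ENNReal.ofReal_mul (by positivity), ENNReal.ofReal_add zero_le_one (by positivity),
          ENNReal.ofReal_mul hb, ENNReal.ofReal_one]
        ring

/-- Lemma 2.3, second estimate.  Under the same hypotheses as the
variable-coefficient backward estimate, any sufficiently regular solution `v` of
`∂ₜ v + M Δ v = f` on `[0,T] × Ω` with `v(T,·) = 0` and homogeneous Neumann boundary
conditions satisfies `‖v(0,·)‖_{L^p(Ω)} ≤ (1 + b D) T^{1/p'} ‖f‖_{L^p(Ω_T)}` where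
`D = C/(1 - C (b-a)/2)` and `p'` is the Hölder conjugate of `p`. -/
theorem stmt_3
    (N : ℕ) (Ω : Set (EuclideanSpace ℝ (Fin N))) (φ : EuclideanSpace ℝ (Fin N) → ℝ)
    (hΩopen : IsOpen Ω) (hΩbdd : Bornology.IsBounded Ω) (hΩne : Ω.Nonempty)
    (hφ : ContDiff ℝ 2 φ) (hΩφ : Ω = {x | φ x < 0})
    (hφgrad : ∀ x ∈ frontier Ω, gradient φ x ≠ 0)
    (T : ℝ) (hT : 0 < T)
    (p pc : ℝ) (hp1 : 1 < p) (hp2 : p ≤ 2) (hpc : 1 / p + 1 / pc = 1)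
    (M : ℝ → EuclideanSpace ℝ (Fin N) → ℝ)
    (a b : ℝ) (ha : 0 < a) (hab : a ≤ b)
    (hM : ∀ t ∈ Icc (0 : ℝ) T, ∀ x ∈ Ω, a ≤ M t x ∧ M t x ≤ b)
    (C : ℝ) (hC : 0 < C)
    -- `C` is a T-independent `L^p` maximal regularity constant for the backward heat
    -- equation with diffusivity `(a+b)/2` and Neumann boundary conditions:
    (hmaxreg : ∀ T' > (0 : ℝ), ∀ w g : ℝ → EuclideanSpace ℝ (Fin N) → ℝ,
      ContDiff ℝ 2 (uncurry w) →
      (∀ t ∈ Icc (0 : ℝ) T', ∀ x ∈ Ω,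
        tderiv w t x + ((a + b) / 2) * lapl (w t) x = g t x) →
      (∀ x ∈ Ω, w T' x = 0) →
      (∀ t ∈ Icc (0 : ℝ) T', ∀ x ∈ frontier Ω, fderiv ℝ (w t) x (gradient φ x) = 0) →
      eLpNorm (fun z : ℝ × EuclideanSpace ℝ (Fin N) => lapl (w z.1) z.2)
          (ENNReal.ofReal p) (cylMeasure T' Ω)
        ≤ ENNReal.ofReal C *
          eLpNorm (fun z : ℝ × EuclideanSpace ℝ (Fin N) => g z.1 z.2)
            (ENNReal.ofReal p) (cylMeasure T' Ω))
    (hsmall : C * ((b - a) / 2) < 1)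
    (v f : ℝ → EuclideanSpace ℝ (Fin N) → ℝ)
    -- sufficient regularity of the solution
    (hreg : ContDiff ℝ 2 (uncurry v))
    -- the equation `∂ₜ v + M Δ v = f` on `[0,T] × Ω`
    (hpde : ∀ t ∈ Icc (0 : ℝ) T, ∀ x ∈ Ω,
      tderiv v t x + M t x * lapl (v t) x = f t x)
    -- final condition `v(T,·) = 0`
    (hfinal : ∀ x ∈ Ω, v T x = 0)
    -- homogeneous Neumann boundary condition
    (hbc : ∀ t ∈ Icc (0 : ℝ) T, ∀ x ∈ frontier Ω, fderiv ℝ (v t) x (gradient φ x) = 0) :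
    eLpNorm (v 0) (ENNReal.ofReal p) (volume.restrict Ω)
      ≤ ENNReal.ofReal ((1 + b * (C / (1 - C * ((b - a) / 2)))) * T ^ (1 / pc)) *
        eLpNorm (fun z : ℝ × EuclideanSpace ℝ (Fin N) => f z.1 z.2)
          (ENNReal.ofReal p) (cylMeasure T Ω) :=
  stmt_3_general N Ω φ hΩopen hΩbdd T hT p pc hp1 hpc M a b ha hab hM C hC hmaxreg hsmall v f hreg
    hpde hfinal hbc
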